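/- Let H₁ and H₂ be real Hilbert spaces, K : H₁ → H₂ a compact continuous linear operator, f ∈ H₂ nonzero, and suppose (γ_j, v_j, β_j, p_j)_{j≥1} is a non-terminating Golub–Kahan bidiagonalization (GKB) process for (K, f). Then the sequences of coefficients (β_j)_{j≥1} and (γ_j)_{j≥2} both converge to 0 as j → ∞. -/

import Mathlib

/-!
The recurrences make `(v j)` and `(p j)` orthonormal: orthogonality of the new vector to the
earlier ones propagates by induction, moving `K` across the inner product. An orthonormal
sequence tends weakly to `0` (Bessel's inequality), and a compact operator turns weak into norm
convergence, so `K (p j) → 0`. Finally `β j = ⟪K (p j), v j⟫` and `γ (j + 1) = ⟪K (p j), v (j + 1)⟫`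
are both bounded by `‖K (p j)‖`.
-/

open Filter ContinuousLinearMap

/-- Index `j : ℕ` corresponds to the `(j+1)`-st element of the process in the paper
(i.e. `γ 0 = γ₁`, `v 0 = v₁`, etc.). -/
structure GKB {H₁ H₂ : Type*}
    [NormedAddCommGroup H₁] [InnerProductSpace ℝ H₁] [CompleteSpace H₁]
    [NormedAddCommGroup H₂] [InnerProductSpace ℝ H₂] [CompleteSpace H₂]
    (K : H₁ →L[ℝ] H₂) (f : H₂)
    (γ β : ℕ → ℝ) (v : ℕ → H₂) (p : ℕ → H₁) : Prop where
  γ_pos : ∀ j, 0 < γ j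
  β_pos : ∀ j, 0 < β j
  γ_zero : γ 0 = ‖f‖
  v_zero : γ 0 • v 0 = f
  β_zero : β 0 = ‖adjoint K (v 0)‖
  p_zero : β 0 • p 0 = adjoint K (v 0)
  γ_succ : ∀ j, γ (j + 1) = ‖K (p j) - β j • v j‖
  v_succ : ∀ j, γ (j + 1) • v (j + 1) = K (p j) - β j • v j
  β_succ : ∀ j, β (j + 1) = ‖adjoint K (v (j + 1)) - γ (j + 1) • p j‖
  p_succ : ∀ j, β (j + 1) • p (j + 1) = adjoint K (v (j + 1)) - γ (j + 1) • p j

open InnerProductSpace RealInnerProductSpace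

theorem norm_eq_one_of_smul_eq {E : Type*} [NormedAddCommGroup E] [NormedSpace ℝ E] {x y : E}
    {c : ℝ} (hc : 0 < c) (hcy : c = ‖y‖) (hxy : c • x = y) : ‖x‖ = 1 := by
  have h := congrArg norm hxy
  rw [norm_smul, Real.norm_of_nonneg hc.le, ← hcy] at h
  exact (mul_eq_left₀ hc.ne').mp h

section Orthonormal

variable {𝕜 E : Type*} [RCLike 𝕜] [NormedAddCommGroup E] [InnerProductSpace 𝕜 E]

theorem orthonormal_of_inner_eq_zero_of_lt {ι : Type*} [LinearOrder ι] {x : ι → E}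
    (hnorm : ∀ i, ‖x i‖ = 1) (horth : ∀ i k, k < i → ⟪x i, x k⟫_𝕜 = 0) :
    Orthonormal 𝕜 x := by
  refine ⟨hnorm, fun i k hik => ?_⟩
  rcases hik.lt_or_gt with h | h
  · exact inner_eq_zero_symm.mp (horth k i h)
  · exact horth i k h

theorem Orthonormal.tendsto_inner_atTop_zero {e : ℕ → E} (he : Orthonormal 𝕜 e) (x : E) :
    Tendsto (fun n => ⟪e n, x⟫_𝕜) atTop (nhds 0) := by
  have hsq := (he.inner_products_summable (x := x)).tendsto_atTop_zero.sqrt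
  simp only [Real.sqrt_sq (norm_nonneg _), Real.sqrt_zero] at hsq
  exact tendsto_zero_iff_norm_tendsto_zero.mpr hsq

theorem inner_eq_ite_of_le {ι : Type*} [LinearOrder ι] {x : ι → E} {n i : ι}
    (hn : ‖x n‖ = 1) (horth : ∀ k < n, ⟪x n, x k⟫_𝕜 = 0) (hi : i ≤ n) :
    ⟪x n, x i⟫_𝕜 = if i = n then 1 else 0 := by
  split_ifs with h
  · rw [h, inner_self_eq_norm_sq_to_K, hn, RCLike.ofReal_one, one_pow]
  · exact horth i (hi.lt_of_ne h)

variable {F : Type*} [NormedAddCommGroup F] [InnerProductSpace 𝕜 F] [CompleteSpace E]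
  [CompleteSpace F]

theorem IsCompactOperator.tendsto_apply_atTop_zero_of_orthonormal {K : E →L[𝕜] F}
    (hK : IsCompactOperator K) {e : ℕ → E} (he : Orthonormal 𝕜 e) :
    Tendsto (fun n => K (e n)) atTop (nhds 0) := by
  refine tendsto_of_subseq_tendsto fun ns hns => ?_
  have hmem : ∀ n, K (e (ns n)) ∈ closure (K '' Metric.closedBall 0 1) := fun n =>
    subset_closure ⟨e (ns n), by simp [he.1], rfl⟩
  obtain ⟨a, -, φ, hφ, hconv⟩ := (hK.isCompact_closure_image_closedBall 1).tendsto_subseq hmem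
  -- `a` is orthogonal to itself because `K (e n)` tends weakly to `0`.
  suffices ha : a = 0 from ⟨φ, ha ▸ hconv⟩
  have hweak : Tendsto (fun n => ⟪K (e (ns (φ n))), a⟫_𝕜) atTop (nhds 0) := by
    simp_rw [← adjoint_inner_right]
    exact (he.tendsto_inner_atTop_zero _).comp (hns.comp hφ.tendsto_atTop)
  exact inner_self_eq_zero.mp (tendsto_nhds_unique (hconv.inner tendsto_const_nhds) hweak)

end Orthonormal

namespace GKB

variable {H₁ H₂ : Type*}
  [NormedAddCommGroup H₁] [InnerProductSpace ℝ H₁] [CompleteSpace H₁]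
  [NormedAddCommGroup H₂] [InnerProductSpace ℝ H₂] [CompleteSpace H₂]
  {K : H₁ →L[ℝ] H₂} {f : H₂} {γ β : ℕ → ℝ} {v : ℕ → H₂} {p : ℕ → H₁}

theorem norm_v (h : GKB K f γ β v p) (j : ℕ) : ‖v j‖ = 1 := by
  cases j with
  | zero => exact norm_eq_one_of_smul_eq (h.γ_pos 0) h.γ_zero h.v_zero
  | succ j => exact norm_eq_one_of_smul_eq (h.γ_pos _) (h.γ_succ j) (h.v_succ j)

theorem norm_p (h : GKB K f γ β v p) (j : ℕ) : ‖p j‖ = 1 := by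
  cases j with
  | zero => exact norm_eq_one_of_smul_eq (h.β_pos 0) h.β_zero h.p_zero
  | succ j => exact norm_eq_one_of_smul_eq (h.β_pos _) (h.β_succ j) (h.p_succ j)

theorem apply_p (h : GKB K f γ β v p) (j : ℕ) :
    K (p j) = γ (j + 1) • v (j + 1) + β j • v j := by
  rw [h.v_succ, sub_add_cancel]

theorem adjoint_v_succ (h : GKB K f γ β v p) (j : ℕ) :
    adjoint K (v (j + 1)) = β (j + 1) • p (j + 1) + γ (j + 1) • p j := by
  rw [h.p_succ, sub_add_cancel]

theorem inner_p_adjoint_v (h : GKB K f γ β v p) {n i : ℕ} (hp : ∀ k < n, ⟪p n, p k⟫ = 0)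
    (hi : i ≤ n) : ⟪p n, adjoint K (v i)⟫ = if i = n then β n else 0 := by
  have hpp {k : ℕ} (hk : k ≤ n) := inner_eq_ite_of_le (h.norm_p n) hp hk
  cases i with
  | zero =>
    rw [← h.p_zero, real_inner_smul_right, hpp hi]
    split_ifs with hn
    · rw [hn, mul_one]
    · rw [mul_zero]
  | succ m =>
    rw [h.adjoint_v_succ, inner_add_right, real_inner_smul_right, real_inner_smul_right, hpp hi,
      hpp (by omega : m ≤ n), if_neg (by omega : m ≠ n)]
    split_ifs with hn
    · rw [hn]; ring
    · ring

theorem inner_v_apply_p (h : GKB K f γ β v p) {n i : ℕ}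
    (hv : ∀ k < n + 1, ⟪v (n + 1), v k⟫ = 0) (hi : i ≤ n) :
    ⟪v (n + 1), K (p i)⟫ = if i = n then γ (n + 1) else 0 := by
  have hvv {k : ℕ} (hk : k ≤ n + 1) := inner_eq_ite_of_le (h.norm_v (n + 1)) hv hk
  rw [h.apply_p, inner_add_right, real_inner_smul_right, real_inner_smul_right,
    hvv (by omega : i + 1 ≤ n + 1), hvv (by omega : i ≤ n + 1), if_neg (by omega : i ≠ n + 1)]
  simp only [Nat.add_right_cancel_iff]
  split_ifs with hin
  · rw [hin]; ring
  · ring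

theorem inner_v_succ_of_le (h : GKB K f γ β v p) {n i : ℕ} (hv : ∀ k < n, ⟪v n, v k⟫ = 0)
    (hp : ∀ k < n, ⟪p n, p k⟫ = 0) (hi : i ≤ n) : ⟪v (n + 1), v i⟫ = 0 := by
  have hγ : γ (n + 1) * ⟪v (n + 1), v i⟫ = 0 := by
    rw [← real_inner_smul_left, h.v_succ, inner_sub_left, ← adjoint_inner_right,
      h.inner_p_adjoint_v hp hi, real_inner_smul_left, inner_eq_ite_of_le (h.norm_v n) hv hi]
    split_ifs <;> ring
  exact (mul_eq_zero.mp hγ).resolve_left (h.γ_pos _).ne'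

theorem inner_p_succ_of_le (h : GKB K f γ β v p) {n i : ℕ}
    (hv : ∀ k < n + 1, ⟪v (n + 1), v k⟫ = 0) (hp : ∀ k < n, ⟪p n, p k⟫ = 0) (hi : i ≤ n) :
    ⟪p (n + 1), p i⟫ = 0 := by
  have hβ : β (n + 1) * ⟪p (n + 1), p i⟫ = 0 := by
    rw [← real_inner_smul_left, h.p_succ, inner_sub_left, adjoint_inner_left,
      h.inner_v_apply_p hv hi, real_inner_smul_left, inner_eq_ite_of_le (h.norm_p n) hp hi]
    split_ifs <;> ring
  exact (mul_eq_zero.mp hβ).resolve_left (h.β_pos _).ne'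

theorem inner_eq_zero_of_lt (h : GKB K f γ β v p) (n : ℕ) :
    ∀ i < n, ⟪v n, v i⟫ = 0 ∧ ⟪p n, p i⟫ = 0 := by
  induction n with
  | zero => exact fun i hi => absurd hi (Nat.not_lt_zero i)
  | succ n ih =>
    have hp : ∀ k < n, ⟪p n, p k⟫ = 0 := fun k hk => (ih k hk).2
    have hv : ∀ k < n + 1, ⟪v (n + 1), v k⟫ = 0 := fun k hk =>
      h.inner_v_succ_of_le (fun k hk => (ih k hk).1) hp (Nat.lt_succ_iff.mp hk)
    exact fun i hi => ⟨hv i hi, h.inner_p_succ_of_le hv hp (Nat.lt_succ_iff.mp hi)⟩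

theorem orthonormal_v (h : GKB K f γ β v p) : Orthonormal ℝ v :=
  orthonormal_of_inner_eq_zero_of_lt h.norm_v fun i k hki => (h.inner_eq_zero_of_lt i k hki).1

theorem orthonormal_p (h : GKB K f γ β v p) : Orthonormal ℝ p :=
  orthonormal_of_inner_eq_zero_of_lt h.norm_p fun i k hki => (h.inner_eq_zero_of_lt i k hki).2

theorem inner_apply_p_v (h : GKB K f γ β v p) (j : ℕ) : ⟪K (p j), v j⟫ = β j := by
  rw [h.apply_p, inner_add_left, real_inner_smul_left, real_inner_smul_left,
    h.orthonormal_v.inner_eq_zero (by omega : j + 1 ≠ j), real_inner_self_eq_norm_sq, h.norm_v]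
  ring

theorem inner_apply_p_v_succ (h : GKB K f γ β v p) (j : ℕ) :
    ⟪K (p j), v (j + 1)⟫ = γ (j + 1) := by
  rw [h.apply_p, inner_add_left, real_inner_smul_left, real_inner_smul_left,
    h.orthonormal_v.inner_eq_zero (by omega : j ≠ j + 1), real_inner_self_eq_norm_sq, h.norm_v]
  ring

theorem le_norm_of_inner_v_eq (h : GKB K f γ β v p) {c : ℝ} {x : H₂} {i : ℕ}
    (hc : ⟪x, v i⟫ = c) : c ≤ ‖x‖ := by
  simpa [← hc, h.norm_v] using real_inner_le_norm x (v i)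

end GKB

theorem stmt_2_general
    {H₁ H₂ : Type*}
    [NormedAddCommGroup H₁] [InnerProductSpace ℝ H₁] [CompleteSpace H₁]
    [NormedAddCommGroup H₂] [InnerProductSpace ℝ H₂] [CompleteSpace H₂]
    (K : H₁ →L[ℝ] H₂) (hK : IsCompactOperator K) (f : H₂)
    (γ β : ℕ → ℝ) (v : ℕ → H₂) (p : ℕ → H₁)
    (hGKB : GKB K f γ β v p) :
    Tendsto β atTop (nhds 0) ∧ Tendsto (fun j => γ (j + 1)) atTop (nhds 0) := by
  have hKp : Tendsto (fun j => ‖K (p j)‖) atTop (nhds 0) := by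
    simpa only [norm_zero] using (hK.tendsto_apply_atTop_zero_of_orthonormal hGKB.orthonormal_p).norm
  refine ⟨squeeze_zero (fun j => (hGKB.β_pos j).le) (fun j => ?_) hKp,
    squeeze_zero (fun j => (hGKB.γ_pos (j + 1)).le) (fun j => ?_) hKp⟩
  · exact hGKB.le_norm_of_inner_v_eq (hGKB.inner_apply_p_v j)
  · exact hGKB.le_norm_of_inner_v_eq (hGKB.inner_apply_p_v_succ j)

/-- if `K` is moreover compact, then the GKB coefficients `(β j)` and the
tail `(γ j)_{j ≥ 2}` converge to `0`. (With the `0`-based indexing, `γ (j+1)` is the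
paper's `γ_{j+2}`.) -/
theorem stmt_2
    {H₁ H₂ : Type*}
    [NormedAddCommGroup H₁] [InnerProductSpace ℝ H₁] [CompleteSpace H₁]
    [NormedAddCommGroup H₂] [InnerProductSpace ℝ H₂] [CompleteSpace H₂]
    (K : H₁ →L[ℝ] H₂) (hK : IsCompactOperator K) (f : H₂) (hf : f ≠ 0)
    (γ β : ℕ → ℝ) (v : ℕ → H₂) (p : ℕ → H₁)
    (hGKB : GKB K f γ β v p) :
    Tendsto β atTop (nhds 0) ∧ Tendsto (fun j => γ (j + 1)) atTop (nhds 0) :=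
  stmt_2_general K hK f γ β v p hGKB
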